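/- The formula (P ∧ Q) ∨ (¬P △ ¬R) ∨ (¬Q △ ¬S) ∨ (R ⊔ S) is provable in CL9, where P, Q, R, S are distinct general atoms. -/
import Mathlib


/-- CL9-formulas (binary versions of the connectives; negation is applied
only to atoms, i.e., formulas are in negation normal form):
`elit b i` is the elementary literal on atom `i` (negated when `b = false`),
`glit b i` is the general literal on atom `i`;
`pand`/`por` are parallel ∧/∨, `cand`/`cor` are choice ⊓/⊔,
`sand`/`sor` are sequential △/▽. -/
inductive Fml where
  | top : Fml
  | bot : Fml
  | elit : Bool → ℕ → Fml
  | glit : Bool → ℕ → Fml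
  | pand : Fml → Fml → Fml
  | por  : Fml → Fml → Fml
  | cand : Fml → Fml → Fml
  | cor  : Fml → Fml → Fml
  | sand : Fml → Fml → Fml
  | sor  : Fml → Fml → Fml
deriving DecidableEq

namespace Fml

/-- Negation, pushed to atoms via the De Morgan dualities. -/
def neg : Fml → Fml
  | top => bot
  | bot => top
  | elit b i => elit (!b) i
  | glit b i => glit (!b) i
  | pand A B => por A.neg B.neg
  | por A B => pand A.neg B.neg
  | cand A B => cor A.neg B.neg
  | cor A B => cand A.neg B.neg
  | sand A B => sor A.neg B.neg
  | sor A B => sand A.neg B.neg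

/-- E → F abbreviates ¬E ∨ F. -/
def imp (A B : Fml) : Fml := por A.neg B

/-- `SRepl G G' F H` holds iff `H` is the result of replacing in `F` one
surface occurrence of `G` (an occurrence not in the scope of a choice
connective and not in the tail of a sequential subformula) by `G'`. -/
inductive SRepl (G G' : Fml) : Fml → Fml → Prop where
  | here : SRepl G G' G G'
  | pandL {A A' B} : SRepl G G' A A' → SRepl G G' (pand A B) (pand A' B)
  | pandR {A B B'} : SRepl G G' B B' → SRepl G G' (pand A B) (pand A B')
  | porL {A A' B} : SRepl G G' A A' → SRepl G G' (por A B) (por A' B)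
  | porR {A B B'} : SRepl G G' B B' → SRepl G G' (por A B) (por A B')
  | sandL {A A' B} : SRepl G G' A A' → SRepl G G' (sand A B) (sand A' B)
  | sorL {A A' B} : SRepl G G' A A' → SRepl G G' (sor A B) (sor A' B)

/-- The elementarization of a formula: each sequential subformula is replaced
by its head (capitalization), each surface ⊓-subformula by ⊤, each surface
⊔-subformula by ⊥, and each surface general literal by ⊥. -/
def elz : Fml → Fml
  | top => top
  | bot => bot
  | elit b i => elit b i
  | glit _ _ => bot
  | pand A B => pand (elz A) (elz B)
  | por A B => por (elz A) (elz B)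
  | cand _ _ => top
  | cor _ _ => bot
  | sand A _ => elz A
  | sor A _ => elz A

/-- Classical evaluation of a formula under a truth assignment (only its
values on elementary formulas matter). -/
def eval (v : ℕ → Bool) : Fml → Bool
  | top => true
  | bot => false
  | elit b i => if b then v i else !(v i)
  | glit _ _ => false
  | pand A B => eval v A && eval v B
  | por A B => eval v A || eval v B
  | cand A B => eval v A && eval v B
  | cor A B => eval v A || eval v B
  | sand A _ => eval v A
  | sor A _ => eval v A

/-- Classical tautologyhood. -/
def Taut (F : Fml) : Prop := ∀ v : ℕ → Bool, eval v F = true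

/-- A formula is stable iff its elementarization is a classical tautology. -/
def Stable (F : Fml) : Prop := Taut (elz F)

/-- The elementary atom `q` occurs in the formula. -/
def elemOccurs (q : ℕ) : Fml → Prop
  | top => False
  | bot => False
  | elit _ i => i = q
  | glit _ _ => False
  | pand A B => elemOccurs q A ∨ elemOccurs q B
  | por A B => elemOccurs q A ∨ elemOccurs q B
  | cand A B => elemOccurs q A ∨ elemOccurs q B
  | cor A B => elemOccurs q A ∨ elemOccurs q B
  | sand A B => elemOccurs q A ∨ elemOccurs q B
  | sor A B => elemOccurs q A ∨ elemOccurs q B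

end Fml

open Fml

/-- The proof system CL9, given by the rules Wait, Choose, Switch and Match. -/
inductive CL9 : Fml → Prop where
  /-- Wait: `F` is stable, and every result of replacing a surface
  ⊓-subformula of `F` by one of its conjuncts is provable, and every result
  of replacing a surface △-subformula of `F` by its tail is provable. -/
  | wait (F : Fml) (hst : Stable F)
      (hcand₁ : ∀ A B H, SRepl (cand A B) A F H → CL9 H)
      (hcand₂ : ∀ A B H, SRepl (cand A B) B F H → CL9 H)
      (hsand : ∀ A B H, SRepl (sand A B) B F H → CL9 H) :
      CL9 F
  /-- Choose: replace a surface ⊔-subformula by one of its disjuncts. -/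
  | choose {F H : Fml} (A B : Fml)
      (h : SRepl (cor A B) A F H ∨ SRepl (cor A B) B F H)
      (hp : CL9 H) : CL9 F
  /-- Switch: replace a surface ▽-subformula by its tail. -/
  | switch {F H : Fml} (A B : Fml)
      (h : SRepl (sor A B) B F H)
      (hp : CL9 H) : CL9 F
  /-- Match: replace one positive and one negative surface occurrence of a
  general atom `P` by a fresh elementary atom `q`. -/
  | match' {F H : Fml} (F₁ : Fml) (P q : ℕ)
      (hfresh : ¬ elemOccurs q F)
      (h₁ : SRepl (glit true P) (elit true q) F F₁)
      (h₂ : SRepl (glit false P) (elit false q) F₁ H)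
      (hp : CL9 H) : CL9 F

/-- CL9 proves (P ∧ Q) ∨ (¬P △ ¬R) ∨ (¬Q △ ¬S) ∨ (R ⊔ S) for
pairwise distinct general atoms P, Q, R, S. -/
theorem stmt19 (p q r s : ℕ)
    (hpq : p ≠ q) (hpr : p ≠ r) (hps : p ≠ s)
    (hqr : q ≠ r) (hqs : q ≠ s) (hrs : r ≠ s) :
    CL9 (Fml.por (Fml.pand (Fml.glit true p) (Fml.glit true q))
          (Fml.por (Fml.sand (Fml.glit false p) (Fml.glit false r))
            (Fml.por (Fml.sand (Fml.glit false q) (Fml.glit false s))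
              (Fml.cor (Fml.glit true r) (Fml.glit true s))))) := by

  -- Notation used in comments: e0,e1,e2 are elit atoms 0,1,2.
  -- Step 1: Match p (fresh elementary atom 0), Step 2: Match q (fresh atom 1),
  -- Innermost lemma-like pieces are proved inline.
  apply CL9.match' (Fml.por (Fml.pand (Fml.elit true 0) (Fml.glit true q))
          (Fml.por (Fml.sand (Fml.glit false p) (Fml.glit false r))
            (Fml.por (Fml.sand (Fml.glit false q) (Fml.glit false s))
              (Fml.cor (Fml.glit true r) (Fml.glit true s))))) p 0
  · simp [Fml.elemOccurs]
  · exact SRepl.porL (SRepl.pandL SRepl.here)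
  · exact SRepl.porR (SRepl.porL (SRepl.sandL SRepl.here))
  -- F1 = (e0 ∧ Q) ∨ ((¬e0 △ ¬R) ∨ ((¬Q △ ¬S) ∨ (R ⊔ S)))
  apply CL9.match' (Fml.por (Fml.pand (Fml.elit true 0) (Fml.elit true 1))
          (Fml.por (Fml.sand (Fml.elit false 0) (Fml.glit false r))
            (Fml.por (Fml.sand (Fml.glit false q) (Fml.glit false s))
              (Fml.cor (Fml.glit true r) (Fml.glit true s))))) q 1
  · simp [Fml.elemOccurs]
  · exact SRepl.porL (SRepl.pandR SRepl.here)
  · exact SRepl.porR (SRepl.porR (SRepl.porL (SRepl.sandL SRepl.here)))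
  -- F2 = (e0 ∧ e1) ∨ ((¬e0 △ ¬R) ∨ ((¬e1 △ ¬S) ∨ (R ⊔ S)))
  apply CL9.wait
  · intro v
    simp only [Fml.elz, Fml.eval]
    cases v 0 <;> cases v 1 <;> simp
  · intro A B H h
    exfalso; casesm* Fml.SRepl _ _ _ _
  · intro A B H h
    exfalso; casesm* Fml.SRepl _ _ _ _
  · intro A B H h
    cases h with
    | porL h => exfalso; casesm* Fml.SRepl _ _ _ _
    | porR h =>
      cases h with
      | porL h =>
        cases h with
        | here =>
          -- G1 = (e0 ∧ e1) ∨ (¬R ∨ ((¬e1 △ ¬S) ∨ (R ⊔ S)))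
          apply CL9.choose (Fml.glit true r) (Fml.glit true s)
            (Or.inl (SRepl.porR (SRepl.porR (SRepl.porR SRepl.here))))
          -- G1a = (e0 ∧ e1) ∨ (¬R ∨ ((¬e1 △ ¬S) ∨ R))
          apply CL9.match' (Fml.por (Fml.pand (Fml.elit true 0) (Fml.elit true 1))
              (Fml.por (Fml.glit false r)
                (Fml.por (Fml.sand (Fml.elit false 1) (Fml.glit false s))
                  (Fml.elit true 2)))) r 2
          · simp [Fml.elemOccurs]
          · exact SRepl.porR (SRepl.porR (SRepl.porR SRepl.here))
          · exact SRepl.porR (SRepl.porL SRepl.here)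
          -- G1b = (e0 ∧ e1) ∨ (¬e2 ∨ ((¬e1 △ ¬S) ∨ e2))
          apply CL9.wait
          · intro v
            simp only [Fml.elz, Fml.eval]
            cases v 2 <;> simp
          · intro A B H h; exfalso; casesm* Fml.SRepl _ _ _ _
          · intro A B H h; exfalso; casesm* Fml.SRepl _ _ _ _
          · intro A B H h
            cases h with
            | porL h => exfalso; casesm* Fml.SRepl _ _ _ _
            | porR h =>
              cases h with
              | porL h => exfalso; casesm* Fml.SRepl _ _ _ _
              | porR h =>
                cases h with
                | porL h =>
                  cases h with
                  | here =>
                    -- G1c = (e0 ∧ e1) ∨ (¬e2 ∨ (¬S ∨ e2))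
                    apply CL9.wait
                    · intro v
                      simp only [Fml.elz, Fml.eval]
                      cases v 2 <;> simp
                    all_goals (intro A B H h; exfalso; casesm* Fml.SRepl _ _ _ _)
                  | sandL h => exfalso; casesm* Fml.SRepl _ _ _ _
                | porR h => exfalso; casesm* Fml.SRepl _ _ _ _
        | sandL h => exfalso; casesm* Fml.SRepl _ _ _ _
      | porR h =>
        cases h with
        | porL h =>
          cases h with
          | here =>
            -- G2 = (e0 ∧ e1) ∨ ((¬e0 △ ¬R) ∨ (¬S ∨ (R ⊔ S)))
            apply CL9.choose (Fml.glit true r) (Fml.glit true s)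
              (Or.inr (SRepl.porR (SRepl.porR (SRepl.porR SRepl.here))))
            -- G2a = (e0 ∧ e1) ∨ ((¬e0 △ ¬R) ∨ (¬S ∨ S))
            apply CL9.match' (Fml.por (Fml.pand (Fml.elit true 0) (Fml.elit true 1))
                (Fml.por (Fml.sand (Fml.elit false 0) (Fml.glit false r))
                  (Fml.por (Fml.glit false s)
                    (Fml.elit true 2)))) s 2
            · simp [Fml.elemOccurs]
            · exact SRepl.porR (SRepl.porR (SRepl.porR SRepl.here))
            · exact SRepl.porR (SRepl.porR (SRepl.porL SRepl.here))
            -- G2b = (e0 ∧ e1) ∨ ((¬e0 △ ¬R) ∨ (¬e2 ∨ e2))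
            apply CL9.wait
            · intro v
              simp only [Fml.elz, Fml.eval]
              cases v 0 <;> cases v 2 <;> simp
            · intro A B H h; exfalso; casesm* Fml.SRepl _ _ _ _
            · intro A B H h; exfalso; casesm* Fml.SRepl _ _ _ _
            · intro A B H h
              cases h with
              | porL h => exfalso; casesm* Fml.SRepl _ _ _ _
              | porR h =>
                cases h with
                | porL h =>
                  cases h with
                  | here =>
                    -- G2c = (e0 ∧ e1) ∨ (¬R ∨ (¬e2 ∨ e2))
                    apply CL9.wait
                    · intro v
                      simp only [Fml.elz, Fml.eval]
                      cases v 2 <;> simp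
                    all_goals (intro A B H h; exfalso; casesm* Fml.SRepl _ _ _ _)
                  | sandL h => exfalso; casesm* Fml.SRepl _ _ _ _
                | porR h => exfalso; casesm* Fml.SRepl _ _ _ _
          | sandL h => exfalso; casesm* Fml.SRepl _ _ _ _
        | porR h => exfalso; casesm* Fml.SRepl _ _ _ _
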